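/- arXiv:1701.00848 — 3 statements merged into one kernel-verified Lean document; each statement's English description precedes it below -/
import Mathlib

section
/- For all natural numbers i and j, the natural number 2^(3i+4j) · 3^(i+2j) · i! · j! divides (4i + 6j + 1)!; equivalently, b(i,j) = (4i + 6j + 1)! / (2^(3i+4j) · 3^(i+2j) · i! · j!) is an integer. -/
/-!
Since `2^3 · 3 = 4!` and `2^4 · 3^2 = 144` divides `6! = 720`, the divisor divides
`(4!^i · i!) · (6!^j · j!)`. Each factor `n!^m · m!` divides `(m n)!`, the quotient counting the
partitions of an `(m n)`-element set into `m` blocks of size `n`; finally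
`(4i)! (6j)! ∣ (4i + 6j)!` by integrality of binomial coefficients.
-/

open Nat

theorem Nat.pow_mul_factorial_dvd_factorial_mul {a n : ℕ} (m : ℕ) (hn : n ≠ 0) (ha : a ∣ n !) :
    a ^ m * m ! ∣ (m * n)! :=
  calc a ^ m * m ! ∣ n ! ^ m * m ! := mul_dvd_mul_right (pow_dvd_pow_of_dvd ha m) _
    _ ∣ (m * n)! := Dvd.intro_left (uniformBell m n) <| by
      rw [← mul_assoc, uniformBell_mul_eq m hn]

/-- `2^(3i+4j) · 3^(i+2j) · i! · j!` divides `(4i + 6j + 1)!`. -/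
theorem b_integer (i j : ℕ) :
    2 ^ (3 * i + 4 * j) * 3 ^ (i + 2 * j) * i ! * j ! ∣ (4 * i + 6 * j + 1)! := by
  calc 2 ^ (3 * i + 4 * j) * 3 ^ (i + 2 * j) * i ! * j !
      = (24 ^ i * i !) * (144 ^ j * j !) := by
        rw [show (24 : ℕ) = 2 ^ 3 * 3 by norm_num, show (144 : ℕ) = 2 ^ 4 * 3 ^ 2 by norm_num,
          mul_pow, mul_pow, ← pow_mul, ← pow_mul, ← pow_mul]
        ring
    _ ∣ (i * 4)! * (j * 6)! :=
      mul_dvd_mul (pow_mul_factorial_dvd_factorial_mul i (by norm_num) (by decide))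
        (pow_mul_factorial_dvd_factorial_mul j (by norm_num) (by decide))
    _ ∣ (i * 4 + j * 6)! := factorial_mul_factorial_dvd_factorial_add _ _
    _ ∣ (4 * i + 6 * j + 1)! := factorial_dvd_factorial (by omega)
end

section
/- For all natural numbers i and j, the 2-adic valuation of (4i + 6j + 1)! satisfies ν₂((4i + 6j + 1)!) ≥ 3i + 4j + ν₂(i!) + ν₂(j!). -/
/-!
Since `ν₂((2n)!) = ν₂(n!) + n`, we get `ν₂((4i)!) = ν₂(i!) + 3i` and
`ν₂((6j)!) = ν₂((3j)!) + 3j ≥ ν₂((2j)!) + 3j = ν₂(j!) + 4j`. As `a! b!` divides `(a + b)!`,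
`n ↦ ν₂(n!)` is superadditive and monotone, which combines the two bounds.
-/

open Nat

theorem padicValNat_factorial_add_le_factorial_add (p a b : ℕ) :
    padicValNat p a ! + padicValNat p b ! ≤ padicValNat p (a + b)! := by
  rcases eq_or_ne p 1 with rfl | hp
  · simp [padicValNat_one_left]
  rw [← pow_dvd_iff_le_padicValNat hp (factorial_ne_zero _), pow_add]
  exact (mul_dvd_mul pow_padicValNat_dvd pow_padicValNat_dvd).trans
    (factorial_mul_factorial_dvd_factorial_add a b)

theorem padicValNat_factorial_le_factorial (p : ℕ) {m n : ℕ} (h : m ≤ n) :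
    padicValNat p m ! ≤ padicValNat p n ! := by
  obtain ⟨k, rfl⟩ := exists_add_of_le h
  exact (Nat.le_add_right _ _).trans (padicValNat_factorial_add_le_factorial_add p m k)

theorem padicValNat_two_factorial_four_mul (n : ℕ) :
    padicValNat 2 (4 * n)! = padicValNat 2 n ! + 3 * n := by
  rw [show 4 * n = 2 * (2 * n) by ring, padicValNat_factorial_mul, padicValNat_factorial_mul]
  ring

theorem padicValNat_two_factorial_add_four_mul_le_six_mul (n : ℕ) :
    padicValNat 2 n ! + 4 * n ≤ padicValNat 2 (6 * n)! :=
  calc padicValNat 2 n ! + 4 * n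
      = padicValNat 2 (2 * n)! + 3 * n := by rw [padicValNat_factorial_mul]; ring
    _ ≤ padicValNat 2 (3 * n)! + 3 * n := by
      gcongr; exact padicValNat_factorial_le_factorial 2 (by omega)
    _ = padicValNat 2 (6 * n)! := by
      rw [show 6 * n = 2 * (3 * n) by ring, padicValNat_factorial_mul]

/-- `ν₂((4i + 6j + 1)!) ≥ 3i + 4j + ν₂(i!) + ν₂(j!)`. -/
theorem nu_two_factorial_lower_bound (i j : ℕ) :
    3 * i + 4 * j + padicValNat 2 (i !) + padicValNat 2 (j !)
      ≤ padicValNat 2 ((4 * i + 6 * j + 1)!) := by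
  have hi := padicValNat_two_factorial_four_mul i
  have hj := padicValNat_two_factorial_add_four_mul_le_six_mul j
  calc 3 * i + 4 * j + padicValNat 2 (i !) + padicValNat 2 (j !)
      ≤ padicValNat 2 (4 * i)! + padicValNat 2 (6 * j)! := by omega
    _ ≤ padicValNat 2 (4 * i + 6 * j)! := padicValNat_factorial_add_le_factorial_add 2 _ _
    _ ≤ padicValNat 2 (4 * i + 6 * j + 1)! := padicValNat_factorial_le_factorial 2 (le_succ _)
end

section
/- For all natural numbers i and j, the 3-adic valuation of (4i + 6j + 1)! satisfies ν₃((4i + 6j + 1)!) ≥ i + 2j + ν₃(i!) + ν₃(j!). -/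
/-!
By Legendre, `ν₃((3n)!) = n + ν₃(n!)`, so `ν₃((3i)!) + ν₃((6j)!) = i + ν₃(i!) + 2j + ν₃((2j)!)`,
which already dominates the left-hand side. Since `(3i)! (6j)!` divides `(3i + 6j)!`, which divides
`(4i + 6j + 1)!`, the right-hand side is at least as large.
-/

open Nat

namespace Nat

variable {p : ℕ} [Fact p.Prime]

theorem padicValNat_le_of_dvd {a b : ℕ} (hb : b ≠ 0) (h : a ∣ b) :
    padicValNat p a ≤ padicValNat p b :=
  (padicValNat_dvd_iff_le hb).1 (pow_padicValNat_dvd.trans h)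

theorem padicValNat_factorial_mono {m n : ℕ} (h : m ≤ n) :
    padicValNat p m ! ≤ padicValNat p n ! :=
  padicValNat_le_of_dvd (factorial_ne_zero n) (factorial_dvd_factorial h)

theorem padicValNat_factorial_add_le (m n : ℕ) :
    padicValNat p m ! + padicValNat p n ! ≤ padicValNat p (m + n)! := by
  rw [← padicValNat.mul (factorial_ne_zero m) (factorial_ne_zero n)]
  exact padicValNat_le_of_dvd (factorial_ne_zero _) (factorial_mul_factorial_dvd_factorial_add m n)

end Nat

/-- `ν₃((4i + 6j + 1)!) ≥ i + 2j + ν₃(i!) + ν₃(j!)`. -/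
theorem nu_three_factorial_lower_bound (i j : ℕ) :
    i + 2 * j + padicValNat 3 (i !) + padicValNat 3 (j !)
      ≤ padicValNat 3 ((4 * i + 6 * j + 1)!) := by
  have hj : padicValNat 3 j ! ≤ padicValNat 3 (2 * j)! := padicValNat_factorial_mono (by omega)
  calc i + 2 * j + padicValNat 3 (i !) + padicValNat 3 (j !)
      ≤ padicValNat 3 (3 * i)! + padicValNat 3 (3 * (2 * j))! := by
        rw [padicValNat_factorial_mul, padicValNat_factorial_mul]
        omega
    _ ≤ padicValNat 3 (3 * i + 3 * (2 * j))! := padicValNat_factorial_add_le _ _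
    _ ≤ padicValNat 3 (4 * i + 6 * j + 1)! := padicValNat_factorial_mono (by omega)
end
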